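/- arXiv:2309.08445 — 3 statements merged into one kernel-verified Lean document; each statement's English description precedes it below -/
import Mathlib

section
/- Assume β² < 1/4, let m ≥ 1 be an integer, and let c ∈ ℂ with Re c ≤ 0 or Re c ≥ 1. If ψ : [0,1] → ℂ is C² with ψ(0) = ψ(1) = 0 and ψ''(y) − m²ψ(y) + β²ψ(y)/(y−c)² = 0 for all y ∈ (0,1), then ψ ≡ 0. (In particular, for β² < 1/4 no c with Re c ≤ 0 or Re c ≥ 1 is an eigenvalue of the linearized operator.) -/
/-!
For `Re c ≤ 0` and `0 < y` one has `Re (y - c)⁻² ≤ y⁻²`. Pairing the equation with `ψ`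
and integrating by parts gives
`‖ψ'‖² + m²‖ψ‖² = β² ∫ |ψ|² Re (y - c)⁻² ≤ β² ∫ |ψ|² / y² ≤ 4β² ‖ψ'‖²` (norms in `L²(0,1)`),
the last step being Hardy's inequality for `ψ(0) = 0`; since `4β² < 1` this forces `‖ψ‖ = 0`.
The reflection `y ↦ 1 - y`, `c ↦ 1 - c` reduces the case `Re c ≥ 1` to `Re c ≤ 0`.
-/

open Set MeasureTheory intervalIntegral Filter Topology
open scoped Interval

section Hardy

theorem norm_le_mul_of_hasDerivAt_of_norm_le {F : Type*} [NormedAddCommGroup F] [NormedSpace ℝ F]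
    [CompleteSpace F] {f f' : ℝ → F} {a : ℝ} (hf : ContinuousOn f (Icc 0 a))
    (hf' : ContinuousOn f' (Icc 0 a)) (hd : ∀ y ∈ Ioo 0 a, HasDerivAt f (f' y) y) (h0 : f 0 = 0)
    {M : ℝ} (hM : ∀ y ∈ Icc 0 a, ‖f' y‖ ≤ M) : ∀ y ∈ Icc 0 a, ‖f y‖ ≤ M * y := by
  intro y hy
  have hsub : Icc 0 y ⊆ Icc 0 a := Icc_subset_Icc le_rfl hy.2
  have hftc : ∫ t in (0 : ℝ)..y, f' t = f y := by
    rw [integral_eq_sub_of_hasDeriv_right_of_le hy.1 (hf.mono hsub)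
      (fun t ht => (hd t ⟨ht.1, ht.2.trans_le hy.2⟩).hasDerivWithinAt)
      ((hf'.mono hsub).intervalIntegrable_of_Icc hy.1), h0, sub_zero]
  rw [← hftc]
  have hbound : ∀ t ∈ Ι 0 y, ‖f' t‖ ≤ M := fun t ht => by
    rw [uIoc_of_le hy.1] at ht
    exact hM t ⟨ht.1.le, ht.2.trans hy.2⟩
  simpa [abs_of_nonneg hy.1] using norm_integral_le_of_norm_le_const hbound

variable {E : Type*} [NormedAddCommGroup E] {f f' : ℝ → E} {a : ℝ}

theorem continuousOn_norm_sq_div (hf : ContinuousOn f (Icc 0 a)) {M : ℝ}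
    (hM : ∀ y ∈ Icc 0 a, ‖f y‖ ≤ M * y) : ContinuousOn (fun y => ‖f y‖ ^ 2 / y) (Icc 0 a) := by
  intro y hy
  rcases hy.1.eq_or_lt with rfl | hy0
  · -- `‖f y‖² / y ≤ M² y` squeezes the quotient to its junk value `0 / 0 = 0`
    have hsq : ∀ z ∈ Icc 0 a, ‖‖f z‖ ^ 2 / z‖ ≤ M ^ 2 * z := fun z hz => by
      rw [Real.norm_of_nonneg (div_nonneg (by positivity) hz.1)]
      refine div_le_of_le_mul₀ hz.1 (mul_nonneg (by positivity) hz.1) ?_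
      calc ‖f z‖ ^ 2 ≤ (M * z) ^ 2 := pow_le_pow_left₀ (norm_nonneg _) (hM z hz) 2
        _ = M ^ 2 * z * z := by ring
    have hlim : Tendsto (fun z : ℝ => M ^ 2 * z) (𝓝[Icc 0 a] 0) (𝓝 0) := by
      simpa using
        ((tendsto_id (x := 𝓝 (0 : ℝ))).const_mul (M ^ 2)).mono_left nhdsWithin_le_nhds
    simpa [ContinuousWithinAt] using
      squeeze_zero_norm' (eventually_nhdsWithin_of_forall hsq) hlim
  · exact ((hf.norm.pow 2) y hy).div continuousWithinAt_id hy0.ne'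

variable [InnerProductSpace ℝ E]

theorem abs_two_mul_inner_div_le (u v : E) {y : ℝ} (hy : 0 < y) :
    |2 * inner ℝ u v / y| ≤ ‖u‖ ^ 2 / y ^ 2 / 2 + 2 * ‖v‖ ^ 2 := by
  rw [abs_div, abs_mul, abs_two, abs_of_pos hy]
  calc 2 * |inner ℝ u v| / y ≤ 2 * (‖u‖ * ‖v‖) / y := by
        gcongr
        exact abs_real_inner_le_norm u v
    _ = 2 * (‖u‖ / y) * ‖v‖ := by ring
    _ ≤ (‖u‖ / y) ^ 2 / 2 + 2 * ‖v‖ ^ 2 := by nlinarith [sq_nonneg (‖u‖ / y - 2 * ‖v‖)]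
    _ = ‖u‖ ^ 2 / y ^ 2 / 2 + 2 * ‖v‖ ^ 2 := by rw [div_pow]

variable [CompleteSpace E] (ha : 0 ≤ a) (hf : ContinuousOn f (Icc 0 a))
  (hf' : ContinuousOn f' (Icc 0 a)) (hd : ∀ y ∈ Ioo 0 a, HasDerivAt f (f' y) y) (h0 : f 0 = 0)
include ha hf hf' hd h0

theorem intervalIntegrable_norm_sq_div_sq :
    IntervalIntegrable (fun y => ‖f y‖ ^ 2 / y ^ 2) volume 0 a := by
  obtain ⟨M, hM⟩ := isCompact_Icc.exists_bound_of_continuousOn hf'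
  have hlip := norm_le_mul_of_hasDerivAt_of_norm_le hf hf' hd h0 hM
  rw [intervalIntegrable_iff_integrableOn_Ioc_of_le ha]
  refine IntegrableOn.of_bound measure_Ioc_lt_top ?_ (M ^ 2) ?_
  · refine ContinuousOn.aestronglyMeasurable ?_ measurableSet_Ioc
    exact ((hf.mono Ioc_subset_Icc_self).norm.pow 2).div (continuousOn_id.pow 2)
      fun y hy => (pow_pos hy.1 2).ne'
  · refine ae_restrict_of_forall_mem measurableSet_Ioc fun y hy => ?_
    rw [Real.norm_of_nonneg (by positivity), div_le_iff₀ (pow_pos hy.1 2), ← mul_pow]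
    exact pow_le_pow_left₀ (norm_nonneg _) (hlip y (Ioc_subset_Icc_self hy)) 2

theorem integral_norm_sq_div_sq_le :
    ∫ y in (0 : ℝ)..a, ‖f y‖ ^ 2 / y ^ 2 ≤ 4 * ∫ y in (0 : ℝ)..a, ‖f' y‖ ^ 2 := by
  obtain ⟨M, hM⟩ := isCompact_Icc.exists_bound_of_continuousOn hf'
  have hlip := norm_le_mul_of_hasDerivAt_of_norm_le hf hf' hd h0 hM
  have hI := intervalIntegrable_norm_sq_div_sq ha hf hf' hd h0
  have hJ : IntervalIntegrable (fun y => ‖f' y‖ ^ 2) volume 0 a :=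
    (hf'.norm.pow 2).intervalIntegrable_of_Icc ha
  have hX : IntervalIntegrable (fun y => 2 * inner ℝ (f y) (f' y) / y) volume 0 a := by
    refine ((hI.div_const 2).add (hJ.const_mul 2)).mono_fun' ?_ ?_
    · rw [uIoc_of_le ha]
      refine ContinuousOn.aestronglyMeasurable ?_ measurableSet_Ioc
      exact (continuousOn_const.mul ((hf.mono Ioc_subset_Icc_self).inner
        (hf'.mono Ioc_subset_Icc_self))).div continuousOn_id fun y hy => hy.1.ne'
    · rw [uIoc_of_le ha]
      exact ae_restrict_of_forall_mem measurableSet_Ioc fun y hy =>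
        abs_two_mul_inner_div_le (f y) (f' y) hy.1
  -- integrate `(‖f y‖² / y)' = 2⟪f y, f' y⟫ / y - ‖f y‖² / y²`
  have hparts : 0 ≤ ∫ y in (0 : ℝ)..a, (2 * inner ℝ (f y) (f' y) / y - ‖f y‖ ^ 2 / y ^ 2) := by
    rw [integral_eq_sub_of_hasDeriv_right_of_le ha (continuousOn_norm_sq_div hf hlip)
      (fun x hx => ?_) (hX.sub hI)]
    · simp only [div_zero, sub_zero]
      exact div_nonneg (by positivity) ha
    · convert ((hd x hx).norm_sq.fun_div (hasDerivAt_id' x) hx.1.ne').hasDerivWithinAt using 1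
      field_simp
  have hamgm : ∫ y in (0 : ℝ)..a, 2 * inner ℝ (f y) (f' y) / y
      ≤ ∫ y in (0 : ℝ)..a, (‖f y‖ ^ 2 / y ^ 2 / 2 + 2 * ‖f' y‖ ^ 2) :=
    integral_mono_on_of_le_Ioo ha hX ((hI.div_const 2).add (hJ.const_mul 2)) fun y hy =>
      (le_abs_self _).trans (abs_two_mul_inner_div_le (f y) (f' y) hy.1)
  rw [integral_sub hX hI] at hparts
  rw [integral_add (hI.div_const 2) (hJ.const_mul 2), intervalIntegral.integral_div,
    intervalIntegral.integral_const_mul] at hamgm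
  linarith

end Hardy

section Energy

variable {E : Type*} [NormedAddCommGroup E] {f f' f'' : ℝ → E} {a b : ℝ}

theorem eq_zero_of_integral_norm_sq_nonpos (hab : a < b) (hf : ContinuousOn f (Icc a b))
    (hint : ∫ y in a..b, ‖f y‖ ^ 2 ≤ 0) : ∀ y ∈ Icc a b, f y = 0 := by
  by_contra! ⟨y, hy, hfy⟩
  have hpos : 0 < ∫ y in a..b, ‖f y‖ ^ 2 :=
    integral_pos hab (hf.norm.pow 2) (fun _ _ => by positivity) ⟨y, hy, by positivity⟩
  linarith

variable [InnerProductSpace ℝ E]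

theorem integral_norm_sq_deriv_add_inner_deriv2 (hab : a ≤ b) (hf : ContinuousOn f (Icc a b))
    (hf' : ContinuousOn f' (Icc a b)) (hf'' : ContinuousOn f'' (Icc a b))
    (hd1 : ∀ y ∈ Ioo a b, HasDerivAt f (f' y) y) (hd2 : ∀ y ∈ Ioo a b, HasDerivAt f' (f'' y) y) :
    ∫ y in a..b, (‖f' y‖ ^ 2 + inner ℝ (f y) (f'' y))
      = inner ℝ (f b) (f' b) - inner ℝ (f a) (f' a) := by
  refine integral_eq_sub_of_hasDeriv_right_of_le hab (hf.inner hf') (fun y hy => ?_)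
    (((hf'.norm.pow 2).add (hf.inner hf'')).intervalIntegrable_of_Icc hab)
  convert ((hd1 y hy).inner ℝ (hd2 y hy)).hasDerivWithinAt using 1
  simp [add_comm]

end Energy

theorem Complex.real_inner_mul_self (z w : ℂ) : inner ℝ z (w * z) = w.re * ‖z‖ ^ 2 := by
  rw [Complex.inner, mul_assoc, Complex.mul_conj', ← Complex.ofReal_pow, Complex.re_mul_ofReal]

theorem Complex.re_inv_sq_sub_le {y : ℝ} (hy : 0 < y) {c : ℂ} (hc : c.re ≤ 0) :
    (((y : ℂ) - c) ^ 2)⁻¹.re ≤ (y ^ 2)⁻¹ := by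
  have hdist : y ≤ ‖(y : ℂ) - c‖ := by
    have := Complex.re_le_norm ((y : ℂ) - c)
    rw [Complex.sub_re, Complex.ofReal_re] at this
    linarith
  calc (((y : ℂ) - c) ^ 2)⁻¹.re ≤ ‖(((y : ℂ) - c) ^ 2)⁻¹‖ := Complex.re_le_norm _
    _ = (‖(y : ℂ) - c‖ ^ 2)⁻¹ := by rw [norm_inv, norm_pow]
    _ ≤ (y ^ 2)⁻¹ := by gcongr

structure IsTaylorGoldsteinSolution (β : ℝ) (m : ℕ) (c : ℂ) (ψ ψ' ψ'' : ℝ → ℂ) : Prop where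
  continuousOn : ContinuousOn ψ (Icc 0 1)
  continuousOn_deriv : ContinuousOn ψ' (Icc 0 1)
  continuousOn_deriv2 : ContinuousOn ψ'' (Icc 0 1)
  hasDerivAt : ∀ y ∈ Ioo (0 : ℝ) 1, HasDerivAt ψ (ψ' y) y
  hasDerivAt_deriv : ∀ y ∈ Ioo (0 : ℝ) 1, HasDerivAt ψ' (ψ'' y) y
  zero_left : ψ 0 = 0
  zero_right : ψ 1 = 0
  equation : ∀ y ∈ Ioo (0 : ℝ) 1,
    ψ'' y - (m : ℂ) ^ 2 * ψ y + (β : ℂ) ^ 2 * ψ y / ((y : ℂ) - c) ^ 2 = 0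

namespace IsTaylorGoldsteinSolution

variable {β : ℝ} {m : ℕ} {c : ℂ} {ψ ψ' ψ'' : ℝ → ℂ}

theorem comp_one_sub (h : IsTaylorGoldsteinSolution β m c ψ ψ' ψ'') :
    IsTaylorGoldsteinSolution β m (1 - c) (fun y => ψ (1 - y)) (fun y => -ψ' (1 - y))
      (fun y => ψ'' (1 - y)) := by
  have hIcc : MapsTo (fun y : ℝ => 1 - y) (Icc 0 1) (Icc 0 1) := fun y hy =>
    ⟨by linarith [hy.2], by linarith [hy.1]⟩
  have hIoo : ∀ y ∈ Ioo (0 : ℝ) 1, 1 - y ∈ Ioo (0 : ℝ) 1 := fun y hy =>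
    ⟨by linarith [hy.2], by linarith [hy.1]⟩
  have hrefl : ContinuousOn (fun y : ℝ => 1 - y) (Icc 0 1) := by fun_prop
  refine ⟨h.continuousOn.comp hrefl hIcc, (h.continuousOn_deriv.comp hrefl hIcc).neg,
    h.continuousOn_deriv2.comp hrefl hIcc, fun y hy => ?_, fun y hy => ?_, by simp [h.zero_right],
    by simp [h.zero_left], fun y hy => ?_⟩
  · simpa using (h.hasDerivAt (1 - y) (hIoo y hy)).comp_const_sub 1 y
  · simpa using ((h.hasDerivAt_deriv (1 - y) (hIoo y hy)).comp_const_sub 1 y).fun_neg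
  · convert h.equation (1 - y) (hIoo y hy) using 3
    push_cast
    ring

theorem le_inner_deriv2 (h : IsTaylorGoldsteinSolution β m c ψ ψ' ψ'') (hc : c.re ≤ 0) :
    ∀ y ∈ Ioo (0 : ℝ) 1,
      (m : ℝ) ^ 2 * ‖ψ y‖ ^ 2 - β ^ 2 * (‖ψ y‖ ^ 2 / y ^ 2) ≤ inner ℝ (ψ y) (ψ'' y) := by
  intro y hy
  have hψ'' : ψ'' y = ((m : ℂ) ^ 2 - (β : ℂ) ^ 2 * (((y : ℂ) - c) ^ 2)⁻¹) * ψ y := by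
    linear_combination h.equation y hy
  have hweight : β ^ 2 * ((((y : ℂ) - c) ^ 2)⁻¹.re * ‖ψ y‖ ^ 2)
      ≤ β ^ 2 * (‖ψ y‖ ^ 2 / y ^ 2) := by
    rw [div_eq_inv_mul]
    gcongr
    exact Complex.re_inv_sq_sub_le hy.1 hc
  rw [hψ'', Complex.real_inner_mul_self, Complex.sub_re, ← Complex.ofReal_pow,
    Complex.re_ofReal_mul, ← Complex.ofReal_natCast, ← Complex.ofReal_pow, Complex.ofReal_re]
  linarith

theorem integral_norm_sq_deriv_add_le (h : IsTaylorGoldsteinSolution β m c ψ ψ' ψ'')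
    (hc : c.re ≤ 0) :
    (∫ y in (0 : ℝ)..1, ‖ψ' y‖ ^ 2) + (m : ℝ) ^ 2 * ∫ y in (0 : ℝ)..1, ‖ψ y‖ ^ 2
      ≤ β ^ 2 * ∫ y in (0 : ℝ)..1, ‖ψ y‖ ^ 2 / y ^ 2 := by
  have hI := intervalIntegrable_norm_sq_div_sq zero_le_one h.continuousOn h.continuousOn_deriv
    h.hasDerivAt h.zero_left
  have hJ : IntervalIntegrable (fun y => ‖ψ' y‖ ^ 2) volume 0 1 :=
    (h.continuousOn_deriv.norm.pow 2).intervalIntegrable_of_Icc zero_le_one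
  have hK : IntervalIntegrable (fun y => ‖ψ y‖ ^ 2) volume 0 1 :=
    (h.continuousOn.norm.pow 2).intervalIntegrable_of_Icc zero_le_one
  have hE : IntervalIntegrable (fun y => ‖ψ' y‖ ^ 2 + inner ℝ (ψ y) (ψ'' y)) volume 0 1 :=
    ((h.continuousOn_deriv.norm.pow 2).add
      (h.continuousOn.inner h.continuousOn_deriv2)).intervalIntegrable_of_Icc zero_le_one
  have henergy : ∫ y in (0 : ℝ)..1, (‖ψ' y‖ ^ 2 + inner ℝ (ψ y) (ψ'' y)) = 0 := by
    simpa [h.zero_left, h.zero_right] using integral_norm_sq_deriv_add_inner_deriv2 zero_le_one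
      h.continuousOn h.continuousOn_deriv h.continuousOn_deriv2 h.hasDerivAt h.hasDerivAt_deriv
  have hK' := hK.const_mul ((m : ℝ) ^ 2)
  have hI' := hI.const_mul (β ^ 2)
  have hmono := integral_mono_on_of_le_Ioo zero_le_one ((hJ.add hK').sub hI') hE fun y hy => by
    linarith [h.le_inner_deriv2 hc y hy]
  rw [integral_sub (hJ.add hK') hI', integral_add hJ hK', intervalIntegral.integral_const_mul,
    intervalIntegral.integral_const_mul, henergy] at hmono
  linarith

theorem eq_zero_of_re_nonpos (h : IsTaylorGoldsteinSolution β m c ψ ψ' ψ'')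
    (hβ : β ^ 2 < 1 / 4) (hm : 0 < m) (hc : c.re ≤ 0) : ∀ y ∈ Icc (0 : ℝ) 1, ψ y = 0 := by
  have hHardy := integral_norm_sq_div_sq_le zero_le_one h.continuousOn h.continuousOn_deriv
    h.hasDerivAt h.zero_left
  have hJ : 0 ≤ ∫ y in (0 : ℝ)..1, ‖ψ' y‖ ^ 2 :=
    integral_nonneg zero_le_one fun _ _ => by positivity
  have hm2 : (0 : ℝ) < (m : ℝ) ^ 2 := by positivity
  refine eq_zero_of_integral_norm_sq_nonpos zero_lt_one h.continuousOn ?_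
  nlinarith [h.integral_norm_sq_deriv_add_le hc]

end IsTaylorGoldsteinSolution

theorem stmt11_general (β : ℝ) (hβ : β ^ 2 < 1 / 4) (m : ℕ) (hm : 1 ≤ m)
    (c : ℂ) (hc : c.re ≤ 0 ∨ 1 ≤ c.re)
    (ψ ψ' ψ'' : ℝ → ℂ)
    (hψ : ContinuousOn ψ (Set.Icc 0 1))
    (hψ' : ContinuousOn ψ' (Set.Icc 0 1))
    (hψ'' : ContinuousOn ψ'' (Set.Icc 0 1))
    (hd1 : ∀ y ∈ Set.Ioo (0 : ℝ) 1, HasDerivAt ψ (ψ' y) y)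
    (hd2 : ∀ y ∈ Set.Ioo (0 : ℝ) 1, HasDerivAt ψ' (ψ'' y) y)
    (h0 : ψ 0 = 0) (h1 : ψ 1 = 0)
    (heq : ∀ y ∈ Set.Ioo (0 : ℝ) 1,
      ψ'' y - (m : ℂ) ^ 2 * ψ y + (β : ℂ) ^ 2 * ψ y / ((y : ℂ) - c) ^ 2 = 0) :
    ∀ y ∈ Set.Icc (0 : ℝ) 1, ψ y = 0 := by
  have h : IsTaylorGoldsteinSolution β m c ψ ψ' ψ'' := ⟨hψ, hψ', hψ'', hd1, hd2, h0, h1, heq⟩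
  rcases hc with hc | hc
  · exact h.eq_zero_of_re_nonpos hβ hm hc
  · intro y hy
    have hre : (1 - c).re ≤ 0 := by
      rw [Complex.sub_re, Complex.one_re]
      linarith
    simpa using h.comp_one_sub.eq_zero_of_re_nonpos hβ hm hre (1 - y)
      ⟨by linarith [hy.2], by linarith [hy.1]⟩

/-- No eigenvalues with `Re c ≤ 0` or `Re c ≥ 1` for `β² < 1/4`: every `C²` solution
`ψ : [0,1] → ℂ` (with derivatives `ψ'`, `ψ''`) of the homogeneous Taylor–Goldstein equation
`ψ'' - m²ψ + β²ψ/(y-c)² = 0` on `(0,1)` with `ψ(0) = ψ(1) = 0` vanishes identically. -/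
theorem stmt11 (β : ℝ) (hβ0 : 0 < β) (hβ : β ^ 2 < 1 / 4) (m : ℕ) (hm : 1 ≤ m)
    (c : ℂ) (hc : c.re ≤ 0 ∨ 1 ≤ c.re)
    (ψ ψ' ψ'' : ℝ → ℂ)
    (hψ : ContinuousOn ψ (Set.Icc 0 1))
    (hψ' : ContinuousOn ψ' (Set.Icc 0 1))
    (hψ'' : ContinuousOn ψ'' (Set.Icc 0 1))
    (hd1 : ∀ y ∈ Set.Ioo (0 : ℝ) 1, HasDerivAt ψ (ψ' y) y)
    (hd2 : ∀ y ∈ Set.Ioo (0 : ℝ) 1, HasDerivAt ψ' (ψ'' y) y)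
    (h0 : ψ 0 = 0) (h1 : ψ 1 = 0)
    (heq : ∀ y ∈ Set.Ioo (0 : ℝ) 1,
      ψ'' y - (m : ℂ) ^ 2 * ψ y + (β : ℂ) ^ 2 * ψ y / ((y : ℂ) - c) ^ 2 = 0) :
    ∀ y ∈ Set.Icc (0 : ℝ) 1, ψ y = 0 :=
  stmt11_general β hβ m hm c hc ψ ψ' ψ'' hψ hψ' hψ'' hd1 hd2 h0 h1 heq
end

section
/- Assume β² > 1/4 (so ν = √(β²−1/4) > 0) and let m ≥ 1 be an integer. Define, for c > 0, W_m(c) = M_+(c)·M_-(1+c) − M_-(c)·M_+(1+c). Then there exist sequences (p_k)_{k≥1} and (q_k)_{k≥1} of strictly positive real numbers with p_k → 0 and q_k → 0 as k → ∞, such that |W_m(p_k)| = 2·|M_+(p_k)|·|M_+(1+p_k)| and W_m(q_k) = 0 for all k ≥ 1. -/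
open Complex Filter

/-- The Kummer confluent hypergeometric series `M(a,b,ζ) = ∑ (a)_s/((b)_s s!) ζ^s`. -/
noncomputable def kummerM (a b ζ : ℂ) : ℂ :=
  ∑' s : ℕ, ((ascPochhammer ℂ s).eval a / ((ascPochhammer ℂ s).eval b * (s.factorial : ℂ))) * ζ ^ s

/-- The Whittaker function `M_{0,γ}(ζ) = e^{-ζ/2} ζ^{1/2+γ} M(1/2+γ, 1+2γ, ζ)`,
with the principal branch of the complex power. -/
noncomputable def whittakerM (γ ζ : ℂ) : ℂ :=
  Complex.exp (-ζ / 2) * ζ ^ ((1 : ℂ) / 2 + γ) * kummerM (1 / 2 + γ) (1 + 2 * γ) ζ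

/-- For `β² > 1/4` (so `ν = √(β²-1/4)`), `M₊(ζ) = M_{0,iν}(2mζ)`. -/
noncomputable def Mp (β : ℝ) (m : ℕ) (ζ : ℂ) : ℂ :=
  whittakerM (Complex.I * (Real.sqrt (β ^ 2 - 1 / 4) : ℂ)) (2 * (m : ℂ) * ζ)

/-- For `β² > 1/4`, `M₋(ζ) = M_{0,-iν}(2mζ)`. -/
noncomputable def Mm (β : ℝ) (m : ℕ) (ζ : ℂ) : ℂ :=
  whittakerM (-(Complex.I * (Real.sqrt (β ^ 2 - 1 / 4) : ℂ))) (2 * (m : ℂ) * ζ)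

/-- The Wronskian function `W_m(c) = M₊(c) M₋(1+c) - M₋(c) M₊(1+c)` for `c > 0`. -/
noncomputable def Wm (β : ℝ) (m : ℕ) (c : ℝ) : ℂ :=
  Mp β m (c : ℂ) * Mm β m ((1 : ℂ) + (c : ℂ)) - Mm β m (c : ℂ) * Mp β m ((1 : ℂ) + (c : ℂ))

/-!
On the positive reals `M₋ = conj M₊`, so `W_m(c) = 2i Im f(c)` with `f(c) = M₊(c) conj M₊(1+c)`:
hence `|W_m(c)| = 2 |M₊(c)| |M₊(1+c)|` wherever `Re f(c) = 0`, and `W_m(c) = 0` wherever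
`Im f(c) = 0`. For `c > 0`, `M₊(c) = √(2mc) (2mc)^{iν} e^{-mc} M(1/2+iν, 1+2iν, 2mc)`, and splitting
off the zero of `M₊(1+c)` at `c = 0` (of some order `n ≥ 0`) gives
`f(c) = r(c) e^{iν log c} H(c)` with `r` real and `H` continuous near `0`, `H(0) ≠ 0`.
As `c → 0⁺` the phase `ν log c` sweeps through infinitely many periods while `H(c) ≈ H(0)`, so the
intermediate value theorem gives zeros of `Re f` and of `Im f` accumulating at `0`.
-/

open Set Topology ComplexConjugate

noncomputable def kummerCoeff (a b : ℂ) (s : ℕ) : ℂ :=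
  (ascPochhammer ℂ s).eval a / ((ascPochhammer ℂ s).eval b * (s.factorial : ℂ))

section Pochhammer

variable {b : ℂ} (hb : 1 ≤ b.re)
include hb

lemma one_le_norm_add_natCast (j : ℕ) : 1 ≤ ‖b + j‖ :=
  calc (1 : ℝ) ≤ (b + j).re := by simpa using le_add_of_le_of_nonneg hb j.cast_nonneg
    _ ≤ ‖b + j‖ := re_le_norm _

lemma one_le_norm_ascPochhammer_eval (s : ℕ) : 1 ≤ ‖(ascPochhammer ℂ s).eval b‖ := by
  induction s with
  | zero => simp
  | succ n ih =>
    rw [ascPochhammer_succ_eval, norm_mul]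
    exact one_le_mul_of_one_le_of_one_le ih (one_le_norm_add_natCast hb n)

lemma norm_ascPochhammer_eval_le (a : ℂ) (s : ℕ) :
    ‖(ascPochhammer ℂ s).eval a‖ ≤ ‖(ascPochhammer ℂ s).eval b‖ * (1 + ‖a - b‖) ^ s := by
  induction s with
  | zero => simp
  | succ n ih =>
    have hstep : ‖a + n‖ ≤ ‖b + n‖ * (1 + ‖a - b‖) :=
      calc ‖a + n‖ = ‖(b + n) + (a - b)‖ := by ring_nf
        _ ≤ ‖b + n‖ + ‖a - b‖ := norm_add_le _ _
        _ ≤ ‖b + n‖ * (1 + ‖a - b‖) := by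
          nlinarith [one_le_norm_add_natCast hb n, norm_nonneg (a - b)]
    rw [ascPochhammer_succ_eval, ascPochhammer_succ_eval, norm_mul, norm_mul, pow_succ]
    calc ‖(ascPochhammer ℂ n).eval a‖ * ‖a + n‖
        ≤ (‖(ascPochhammer ℂ n).eval b‖ * (1 + ‖a - b‖) ^ n) * (‖b + n‖ * (1 + ‖a - b‖)) := by
          gcongr
      _ = _ := by ring

lemma norm_kummerCoeff_le (a : ℂ) (s : ℕ) :
    ‖kummerCoeff a b s‖ ≤ (1 + ‖a - b‖) ^ s / s.factorial := by
  have hpos : 0 < ‖(ascPochhammer ℂ s).eval b‖ :=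
    zero_lt_one.trans_le (one_le_norm_ascPochhammer_eval hb s)
  rw [kummerCoeff, norm_div, norm_mul, norm_natCast]
  calc ‖(ascPochhammer ℂ s).eval a‖ / (‖(ascPochhammer ℂ s).eval b‖ * s.factorial)
      ≤ ‖(ascPochhammer ℂ s).eval b‖ * (1 + ‖a - b‖) ^ s /
          (‖(ascPochhammer ℂ s).eval b‖ * s.factorial) := by
        gcongr; exact norm_ascPochhammer_eval_le hb a s
    _ = _ := by field_simp

lemma radius_ofScalars_kummerCoeff (a : ℂ) :
    (FormalMultilinearSeries.ofScalars ℂ (kummerCoeff a b)).radius = ⊤ := by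
  refine FormalMultilinearSeries.radius_eq_top_of_summable_norm _ fun r => ?_
  refine .of_nonneg_of_le (fun s => by positivity) (fun s => ?_)
    (Real.summable_pow_div_factorial ((1 + ‖a - b‖) * r))
  rw [FormalMultilinearSeries.ofScalars_norm, mul_pow, mul_div_right_comm]
  gcongr
  exact norm_kummerCoeff_le hb a s

end Pochhammer

lemma kummerM_eq_ofScalarsSum (a b : ℂ) :
    kummerM a b = FormalMultilinearSeries.ofScalarsSum (E := ℂ) (kummerCoeff a b) := by
  simp [FormalMultilinearSeries.ofScalarsSum_eq_tsum, kummerM, kummerCoeff, funext_iff]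

lemma kummerM_zero (a b : ℂ) : kummerM a b 0 = 1 := by
  simp [kummerM_eq_ofScalarsSum, FormalMultilinearSeries.ofScalarsSum_zero, kummerCoeff]

lemma analyticOnNhd_kummerM (a : ℂ) {b : ℂ} (hb : 1 ≤ b.re) :
    AnalyticOnNhd ℂ (kummerM a b) univ := by
  have h := (FormalMultilinearSeries.ofScalars ℂ (kummerCoeff a b)).hasFPowerSeriesOnBall
    (by rw [radius_ofScalars_kummerCoeff hb]; exact ENNReal.zero_lt_top)
  rw [kummerM_eq_ofScalarsSum]
  exact fun z _ => h.analyticAt_of_mem (by simp [radius_ofScalars_kummerCoeff hb])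

lemma ascPochhammer_eval_conj (a : ℂ) (s : ℕ) :
    (ascPochhammer ℂ s).eval (conj a) = conj ((ascPochhammer ℂ s).eval a) := by
  induction s with
  | zero => simp
  | succ n ih => simp [ascPochhammer_succ_eval, ih]

lemma conj_kummerM_ofReal (a b : ℂ) (x : ℝ) :
    conj (kummerM a b x) = kummerM (conj a) (conj b) x := by
  rw [kummerM, kummerM, conj_tsum]
  simp [ascPochhammer_eval_conj]

lemma conj_whittakerM_ofReal (γ : ℂ) {x : ℝ} (hx : 0 ≤ x) :
    conj (whittakerM γ x) = whittakerM (conj γ) x := by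
  have harg : (x : ℂ).arg ≠ Real.pi := by
    rw [arg_ofReal_of_nonneg hx]; exact Real.pi_ne_zero.symm
  have hpow (n : ℂ) : conj ((x : ℂ) ^ n) = (x : ℂ) ^ conj n := by
    rw [cpow_conj _ _ harg, conj_ofReal]
  simp [whittakerM, ← exp_conj, hpow, conj_kummerM_ofReal, map_ofNat]

lemma one_le_re_one_add_two_mul {γ : ℂ} (hγ : 0 ≤ γ.re) : 1 ≤ (1 + 2 * γ).re := by
  simpa using hγ

lemma analyticAt_whittakerM {γ z : ℂ} (hγ : 0 ≤ γ.re) (hz : z ∈ slitPlane) :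
    AnalyticAt ℂ (whittakerM γ) z := by
  have hK := analyticOnNhd_kummerM (1 / 2 + γ) (one_le_re_one_add_two_mul hγ) z trivial
  unfold whittakerM
  fun_prop (disch := assumption)

lemma not_eventually_whittakerM_eq_zero {γ z : ℂ} (hγ : 0 ≤ γ.re) (hz : z ∈ slitPlane) :
    ¬ ∀ᶠ w in 𝓝 z, whittakerM γ w = 0 := by
  intro h
  have hK : ∀ᶠ w in 𝓝 z, kummerM (1 / 2 + γ) (1 + 2 * γ) w = 0 := by
    filter_upwards [h, isOpen_compl_singleton.mem_nhds (slitPlane_ne_zero hz)] with w hw hw0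
    simpa [whittakerM, exp_ne_zero, cpow_eq_zero_iff, show w ≠ 0 from hw0] using hw
  have := AnalyticOnNhd.eqOn_zero_of_preconnected_of_eventuallyEq_zero
    (analyticOnNhd_kummerM _ (one_le_re_one_add_two_mul hγ)) isPreconnected_univ (mem_univ z) hK
    (mem_univ 0)
  simp [kummerM_zero] at this

lemma whittakerM_I_mul_ofReal (ν : ℝ) {x : ℝ} (hx : 0 < x) :
    whittakerM (I * ν) x = √x * exp (↑(ν * Real.log x) * I) *
      (exp (-x / 2) * kummerM (1 / 2 + I * ν) (1 + 2 * (I * ν)) x) := by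
  have hx0 : (x : ℂ) ≠ 0 := ofReal_ne_zero.2 hx.ne'
  have hsqrt : (x : ℂ) ^ (1 / 2 : ℂ) = √x := by
    rw [Real.sqrt_eq_rpow, ofReal_cpow hx.le]; norm_num
  have hphase : (x : ℂ) ^ (I * ν) = exp (↑(ν * Real.log x) * I) := by
    rw [cpow_def_of_ne_zero hx0, ← ofReal_log hx.le]; push_cast; ring_nf
  rw [whittakerM, cpow_add _ _ hx0, hsqrt, hphase]
  ring

lemma exists_whittakerM_mul_conj_eq (ν : ℝ) {ℓ : ℝ} (hℓ : 0 < ℓ) :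
    ∃ (r : ℝ → ℝ) (H : ℝ → ℂ), (∀ᶠ c in 𝓝 0, ContinuousAt H c) ∧ H 0 ≠ 0 ∧
      ∀ᶠ c : ℝ in 𝓝[>] 0,
        whittakerM (I * ν) (ℓ * c) * conj (whittakerM (I * ν) (ℓ * (1 + c))) =
          r c * (exp (↑(ν * Real.log c) * I) * H c) := by
  have hγ : 0 ≤ (I * ν).re := by simp
  have hℓ' : (ℓ : ℂ) ∈ slitPlane := ofReal_mem_slitPlane.2 hℓ
  -- `whittakerM (I * ν) ℓ` may vanish, so its zero of some order `n` at `ℓ` is split off.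
  obtain ⟨n, g, hg, hg0, hfac⟩ :=
    (analyticAt_whittakerM hγ hℓ').exists_eventuallyEq_pow_smul_nonzero_iff.2
      (not_eventually_whittakerM_eq_zero hγ hℓ')
  set K := kummerM (1 / 2 + I * ν) (1 + 2 * (I * ν))
  have hK (z : ℂ) : ContinuousAt K z :=
    (analyticOnNhd_kummerM _ (by simp) z trivial).continuousAt
  have hshift : Tendsto (fun c : ℝ => (ℓ : ℂ) * (1 + c)) (𝓝 0) (𝓝 ℓ) := by
    simpa using ((by fun_prop) : Continuous (fun c : ℝ => (ℓ : ℂ) * (1 + c))).tendsto 0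
  refine ⟨fun c => √(ℓ * c) * (ℓ * c) ^ n, fun c => exp (↑(ν * Real.log ℓ) * I) *
    (exp (-(ℓ * c : ℂ) / 2) * K (ℓ * c)) * conj (g (ℓ * (1 + c))), ?_, ?_, ?_⟩
  · filter_upwards [hshift.eventually hg.eventually_analyticAt] with c hc
    have hgc : ContinuousAt (fun c : ℝ => g (ℓ * (1 + c))) c :=
      hc.continuousAt.comp (f := fun c : ℝ => (ℓ : ℂ) * (1 + c)) (by fun_prop)
    fun_prop
  · simp [K, kummerM_zero, hg0]
  · filter_upwards [self_mem_nhdsWithin, nhdsWithin_le_nhds (hshift.eventually hfac)]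
      with c (hc : 0 < c) hfc
    have hsub : (ℓ : ℂ) * (1 + c) - ℓ = ↑(ℓ * c) := by push_cast; ring
    have hphase : exp (↑(ν * Real.log (ℓ * c)) * I) =
        exp (↑(ν * Real.log ℓ) * I) * exp (↑(ν * Real.log c) * I) := by
      rw [← exp_add, Real.log_mul hℓ.ne' hc.ne']; push_cast; ring_nf
    rw [hfc, hsub, show (ℓ : ℂ) * c = ↑(ℓ * c) by push_cast; ring,
      whittakerM_I_mul_ofReal ν (by positivity), hphase]
    simp only [smul_eq_mul, map_mul, map_pow, conj_ofReal]
    push_cast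
    ring

lemma exists_mem_Ioo_exp_log_mul_eq {ν : ℝ} (hν : 0 < ν) (w : ℂ) (θ : ℝ) {δ : ℝ} (hδ : 0 < δ) :
    ∃ c ∈ Ioo 0 δ, exp (↑(ν * Real.log c) * I) * w = ‖w‖ * exp (θ * I) := by
  obtain ⟨k, hk⟩ := exists_nat_gt ((θ - w.arg - ν * Real.log δ) / (2 * Real.pi))
  refine ⟨Real.exp ((θ - w.arg - 2 * Real.pi * k) / ν), ⟨Real.exp_pos _, ?_⟩, ?_⟩
  · rw [← Real.lt_log_iff_exp_lt hδ, div_lt_iff₀ hν]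
    rw [div_lt_iff₀ Real.two_pi_pos] at hk
    linarith
  · rw [Real.log_exp, mul_div_cancel₀ _ hν.ne']
    calc exp (↑(θ - w.arg - 2 * Real.pi * k) * I) * w
        = exp (↑(θ - w.arg - 2 * Real.pi * k) * I) * (‖w‖ * exp (w.arg * I)) *
            exp (k * (2 * Real.pi * I)) := by
          rw [norm_mul_exp_arg_mul_I, exp_nat_mul_two_pi_mul_I, mul_one]
      _ = ‖w‖ * exp (↑(θ - w.arg - 2 * Real.pi * k) * I + w.arg * I + k * (2 * Real.pi * I)) := by
          simp only [exp_add]; ring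
      _ = _ := by push_cast; ring_nf

lemma frequently_re_exp_log_mul_eq_zero {ν : ℝ} (hν : 0 < ν) {H : ℝ → ℂ}
    (hH : ∀ᶠ c in 𝓝 0, ContinuousAt H c) (h0 : H 0 ≠ 0) :
    ∃ᶠ c in 𝓝[>] 0, (exp (↑(ν * Real.log c) * I) * H c).re = 0 := by
  set e : ℝ → ℂ := fun c => exp (↑(ν * Real.log c) * I)
  have hnear : ∀ᶠ c in 𝓝 0, ContinuousAt H c ∧ dist (H c) (H 0) < ‖H 0‖ :=
    hH.and (hH.self_of_nhds.eventually (Metric.ball_mem_nhds _ (norm_pos_iff.2 h0)))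
  obtain ⟨η, hη, hball⟩ := Metric.eventually_nhds_iff.1 hnear
  have hclose {c : ℝ} (hc : c ∈ Ioo 0 η) : |(e c * H c).re - (e c * H 0).re| < ‖H 0‖ := by
    rw [← sub_re]
    refine (abs_re_le_norm _).trans_lt ?_
    rw [← mul_sub, norm_mul, norm_exp_ofReal_mul_I, one_mul, ← dist_eq_norm]
    exact (hball (by simpa [abs_of_pos hc.1] using hc.2)).2
  rw [(nhdsGT_basis 0).frequently_iff]
  intro δ hδ
  obtain ⟨v, hv, hvH⟩ := exists_mem_Ioo_exp_log_mul_eq hν (H 0) Real.pi (lt_min hδ hη)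
  obtain ⟨u, hu, huH⟩ := exists_mem_Ioo_exp_log_mul_eq hν (H 0) 0 hv.1
  have hv' : v ∈ Ioo 0 η := ⟨hv.1, hv.2.trans_le (min_le_right _ _)⟩
  have hIcc : Icc u v ⊆ Ioo 0 η := fun c hc => ⟨hu.1.trans_le hc.1, hc.2.trans_lt hv'.2⟩
  have hcont : ContinuousOn (fun c => (e c * H c).re) (Icc u v) := fun c hc => by
    have hc' := hIcc hc
    have hHc : ContinuousAt H c := (hball (by simpa [abs_of_pos hc'.1] using hc'.2)).1
    have hlog : ContinuousAt Real.log c := Real.continuousAt_log hc'.1.ne'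
    exact ContinuousAt.continuousWithinAt (by fun_prop)
  have hu_pos : 0 < (e u * H u).re := by
    have := hclose (hIcc ⟨le_rfl, hu.2.le⟩)
    simp only [e, huH, ofReal_zero, zero_mul, exp_zero, mul_one, ofReal_re] at this
    linarith [abs_lt.1 this]
  have hv_neg : (e v * H v).re < 0 := by
    have := hclose hv'
    simp only [e, hvH, exp_pi_mul_I, mul_neg_one, neg_re, ofReal_re] at this
    linarith [abs_lt.1 this]
  obtain ⟨c, hc, hc0⟩ := intermediate_value_Icc' hu.2.le hcont ⟨hv_neg.le, hu_pos.le⟩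
  exact ⟨c, ⟨hu.1.trans_le hc.1, hc.2.trans_lt (hv.2.trans_le (min_le_left _ _))⟩, hc0⟩

lemma frequently_im_exp_log_mul_eq_zero {ν : ℝ} (hν : 0 < ν) {H : ℝ → ℂ}
    (hH : ∀ᶠ c in 𝓝 0, ContinuousAt H c) (h0 : H 0 ≠ 0) :
    ∃ᶠ c in 𝓝[>] 0, (exp (↑(ν * Real.log c) * I) * H c).im = 0 := by
  refine (frequently_re_exp_log_mul_eq_zero hν (H := fun c => -I * H c)
    (hH.mono fun c hc => continuousAt_const.mul hc) (by simpa using h0)).mono fun c hc => ?_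
  rwa [mul_left_comm, neg_mul, neg_re, I_mul_re, neg_neg] at hc

section Wronskian

variable (β : ℝ) (m : ℕ)

lemma Mm_ofReal_eq_conj {x : ℝ} (hx : 0 ≤ x) : Mm β m x = conj (Mp β m x) := by
  have hmx : 2 * (m : ℂ) * x = ↑(2 * m * x) := by push_cast; ring
  rw [Mp, Mm, hmx, conj_whittakerM_ofReal _ (by positivity)]
  simp

lemma Wm_eq_im_mul_I {c : ℝ} (hc : 0 < c) :
    Wm β m c = ↑(2 * (Mp β m c * conj (Mp β m (1 + c))).im) * I := by
  have h1c : (1 : ℂ) + c = ↑(1 + c) := by push_cast; ring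
  rw [← sub_conj, Wm, h1c, Mm_ofReal_eq_conj β m hc.le, Mm_ofReal_eq_conj β m (by positivity)]
  simp only [map_mul, conj_conj]

lemma norm_Wm_of_re_eq_zero {c : ℝ} (hc : 0 < c)
    (hre : (Mp β m c * conj (Mp β m (1 + c))).re = 0) :
    ‖Wm β m c‖ = 2 * ‖Mp β m c‖ * ‖Mp β m (1 + c)‖ := by
  rw [Wm_eq_im_mul_I β m hc, norm_mul, norm_I, mul_one, norm_real, Real.norm_eq_abs, abs_mul,
    abs_two, abs_im_eq_norm.2 hre, norm_mul, norm_conj, mul_assoc]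

end Wronskian

theorem stmt13_general (β : ℝ) (hβ : 1 / 4 < β ^ 2) (m : ℕ) (hm : 1 ≤ m) :
    ∃ p q : ℕ → ℝ,
      (∀ k, 0 < p k) ∧ (∀ k, 0 < q k) ∧
      Tendsto p atTop (nhds 0) ∧ Tendsto q atTop (nhds 0) ∧
      (∀ k, ‖Wm β m (p k)‖ =
        2 * ‖Mp β m ((p k : ℝ) : ℂ)‖ *
          ‖Mp β m ((1 : ℂ) + ((p k : ℝ) : ℂ))‖) ∧
      (∀ k, Wm β m (q k) = 0) := by
  set ν := √(β ^ 2 - 1 / 4)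
  have hν : 0 < ν := Real.sqrt_pos.2 (by linarith)
  obtain ⟨r, H, hH, hH0, hf⟩ := exists_whittakerM_mul_conj_eq ν (ℓ := 2 * m) (by positivity)
  have hf' : ∀ᶠ c : ℝ in 𝓝[>] 0,
      Mp β m c * conj (Mp β m (1 + c)) = r c * (exp (↑(ν * Real.log c) * I) * H c) := by
    have hℓ : ((2 * m : ℝ) : ℂ) = 2 * m := by push_cast; ring
    filter_upwards [hf] with c hc
    rwa [hℓ] at hc
  have hre : ∃ᶠ c : ℝ in 𝓝[>] 0, 0 < c ∧ (Mp β m c * conj (Mp β m (1 + c))).re = 0 := by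
    refine ((frequently_re_exp_log_mul_eq_zero hν hH hH0).and_eventually
      (hf'.and self_mem_nhdsWithin)).mono fun c ⟨hzero, hfc, hc⟩ => ⟨hc, ?_⟩
    rw [hfc, re_ofReal_mul, hzero, mul_zero]
  have him : ∃ᶠ c : ℝ in 𝓝[>] 0, 0 < c ∧ (Mp β m c * conj (Mp β m (1 + c))).im = 0 := by
    refine ((frequently_im_exp_log_mul_eq_zero hν hH hH0).and_eventually
      (hf'.and self_mem_nhdsWithin)).mono fun c ⟨hzero, hfc, hc⟩ => ⟨hc, ?_⟩
    rw [hfc, im_ofReal_mul, hzero, mul_zero]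
  obtain ⟨p, hp, hp'⟩ := frequently_iff_seq_forall.1 hre
  obtain ⟨q, hq, hq'⟩ := frequently_iff_seq_forall.1 him
  refine ⟨p, q, fun k => (hp' k).1, fun k => (hq' k).1, tendsto_nhds_of_tendsto_nhdsWithin hp,
    tendsto_nhds_of_tendsto_nhdsWithin hq, fun k => norm_Wm_of_re_eq_zero β m (hp' k).1 (hp' k).2,
    fun k => ?_⟩
  rw [Wm_eq_im_mul_I β m (hq' k).1, (hq' k).2]
  simp

/-- For `β² > 1/4` and `m ≥ 1` there are sequences `p_k, q_k > 0` tending to `0` with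
`|W_m(p_k)| = 2 |M₊(p_k)| |M₊(1+p_k)|` and `W_m(q_k) = 0`. -/
theorem stmt13 (β : ℝ) (hβ0 : 0 < β) (hβ : 1 / 4 < β ^ 2) (m : ℕ) (hm : 1 ≤ m) :
    ∃ p q : ℕ → ℝ,
      (∀ k, 0 < p k) ∧ (∀ k, 0 < q k) ∧
      Tendsto p atTop (nhds 0) ∧ Tendsto q atTop (nhds 0) ∧
      (∀ k, ‖Wm β m (p k)‖ =
        2 * ‖Mp β m ((p k : ℝ) : ℂ)‖ *
          ‖Mp β m ((1 : ℂ) + ((p k : ℝ) : ℂ))‖) ∧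
      (∀ k, Wm β m (q k) = 0) :=
  stmt13_general β hβ m hm
end

section
/- Assume β² = 1/4, let m ≥ 1 be an integer, y₀ ≤ 0 and ε ∈ (0,1]. Let φ : [0,1] → ℂ be C² with φ(0) = φ(1) = 0 and φ''(y) − m²φ(y) + (1/4)·φ(y)/(y−y₀+iε)² = F(y) on (0,1), with F continuous. Then (ε²/(1+ε²))·‖φ'‖²_{L²(0,1)} + m²·‖φ‖²_{L²(0,1)} ≤ C·m^{−2}·‖F‖²_{L²(0,1)} for an absolute constant C, and moreover 0 ≤ ∫₀¹ ε(y−y₀)/((y−y₀)²+ε²)² · |φ(y)|² dy ≤ 2·‖φ‖_{L²(0,1)}·‖F‖_{L²(0,1)}. -/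
/-!
Testing the equation against `φ̄` and integrating by parts gives
`∫ φ̄ F = -‖φ'‖² + ∫ q |φ|²` with `q = -m² + 1/(4 (y - y₀ + iε)²)`.
Since `Im (y - y₀ + iε)⁻² = -2ε(y - y₀)/((y - y₀)² + ε²)²`, the imaginary part says that the
weighted integral equals `-2 Im ∫ φ̄ F`, which Cauchy–Schwarz bounds. For `y₀ ≤ 0` and
`0 < y ≤ 1`, `Re (y - y₀ + iε)⁻² ≤ 1/((1 + ε²) y²)`, so by Hardy's inequality
`∫ |φ|²/y² ≤ 4 ‖φ'‖²` the real part gives `(ε²/(1 + ε²)) ‖φ'‖² + m² ‖φ‖² ≤ ‖φ‖ ‖F‖`,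
and AM–GM yields the bound with `C = 1`.
-/

open MeasureTheory Set Filter Topology Complex
open scoped ComplexConjugate RealInnerProductSpace

lemma integrableOn_Ioo_of_continuousOn_of_norm_le {E : Type*} [NormedAddCommGroup E]
    {f : ℝ → E} {a b C : ℝ} (hf : ContinuousOn f (Ioo a b))
    (hC : ∀ x ∈ Ioo a b, ‖f x‖ ≤ C) : IntegrableOn f (Ioo a b) :=
  IntegrableOn.of_bound (by simp) (hf.aestronglyMeasurable measurableSet_Ioo) C
    (ae_restrict_of_forall_mem measurableSet_Ioo hC)

lemma ContinuousOn.integrableOn_Ioo {E : Type*} [NormedAddCommGroup E] {f : ℝ → E} {a b : ℝ}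
    (hf : ContinuousOn f (Icc a b)) : IntegrableOn f (Ioo a b) :=
  hf.integrableOn_Icc.mono_set Ioo_subset_Icc_self

lemma exists_norm_le_mul_of_hasDerivAt {E : Type*} [NormedAddCommGroup E] [NormedSpace ℝ E]
    [CompleteSpace E] {φ φ' : ℝ → E} (hφ : ContinuousOn φ (Icc 0 1))
    (hφ' : ContinuousOn φ' (Icc 0 1)) (hd : ∀ y ∈ Ioo (0 : ℝ) 1, HasDerivAt φ (φ' y) y)
    (h0 : φ 0 = 0) :
    ∃ M, (∀ y ∈ Icc (0 : ℝ) 1, ‖φ' y‖ ≤ M) ∧ ∀ y ∈ Icc (0 : ℝ) 1, ‖φ y‖ ≤ M * y := by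
  obtain ⟨M, hM⟩ := isCompact_Icc.exists_bound_of_continuousOn hφ'
  refine ⟨M, hM, fun y hy => ?_⟩
  have hsub : Icc 0 y ⊆ Icc (0 : ℝ) 1 := Icc_subset_Icc le_rfl hy.2
  have hftc : ∫ t in (0 : ℝ)..y, φ' t = φ y := by
    rw [intervalIntegral.integral_eq_sub_of_hasDerivAt_of_le hy.1 (hφ.mono hsub)
      (fun t ht => hd t ⟨ht.1, ht.2.trans_le hy.2⟩)
      ((hφ'.mono hsub).intervalIntegrable_of_Icc hy.1), h0, sub_zero]
  calc ‖φ y‖ = ‖∫ t in (0 : ℝ)..y, φ' t‖ := by rw [hftc]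
    _ ≤ M * |y - 0| := intervalIntegral.norm_integral_le_of_norm_le_const fun t ht =>
        hM t (hsub (Ioc_subset_Icc_self (uIoc_of_le hy.1 ▸ ht)))
    _ = M * y := by rw [sub_zero, abs_of_nonneg hy.1]

lemma integral_norm_mul_norm_le_sqrt_mul_sqrt {α E : Type*} [MeasurableSpace α] {μ : Measure α}
    [NormedAddCommGroup E] {f g : α → E} (hf : MemLp f 2 μ) (hg : MemLp g 2 μ) :
    ∫ a, ‖f a‖ * ‖g a‖ ∂μ ≤ √(∫ a, ‖f a‖ ^ 2 ∂μ) * √(∫ a, ‖g a‖ ^ 2 ∂μ) := by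
  simpa [Real.sqrt_eq_rpow] using integral_mul_norm_le_Lp_mul_Lq Real.HolderConjugate.two_two
    (by simpa using hf) (by simpa using hg)

lemma norm_integral_conj_mul_le {f g : ℝ → ℂ} (hf : ContinuousOn f (Icc 0 1))
    (hg : ContinuousOn g (Icc 0 1)) :
    ‖∫ y in Ioo 0 1, conj (f y) * g y‖
      ≤ √(∫ y in Ioo 0 1, ‖f y‖ ^ 2) * √(∫ y in Ioo 0 1, ‖g y‖ ^ 2) := by
  have hL2 {h : ℝ → ℂ} (hh : ContinuousOn h (Icc 0 1)) : MemLp h 2 (volume.restrict (Ioo 0 1)) :=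
    (memLp_two_iff_integrable_sq_norm ((hh.mono Ioo_subset_Icc_self).aestronglyMeasurable
      measurableSet_Ioo)).2 (hh.norm.pow 2).integrableOn_Ioo
  calc ‖∫ y in Ioo 0 1, conj (f y) * g y‖ ≤ ∫ y in Ioo 0 1, ‖conj (f y) * g y‖ :=
        norm_integral_le_integral_norm _
    _ = ∫ y in Ioo 0 1, ‖f y‖ * ‖g y‖ := by simp_rw [norm_mul, RCLike.norm_conj]
    _ ≤ _ := integral_norm_mul_norm_le_sqrt_mul_sqrt (hL2 hf) (hL2 hg)

lemma add_mul_le_div_of_le_sqrt_mul_sqrt {X k B N : ℝ} (hX : 0 ≤ X) (hk : 0 < k) (hB : 0 ≤ B)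
    (hN : 0 ≤ N) (h : X + k * B ≤ √B * √N) : X + k * B ≤ N / k := by
  rw [le_div_iff₀ hk]
  have hamgm : 2 * (k * (√B * √N)) ≤ k ^ 2 * B + N := by
    nlinarith [sq_nonneg (k * √B - √N), Real.sq_sqrt hB, Real.sq_sqrt hN]
  nlinarith [mul_le_mul_of_nonneg_left h hk.le, mul_nonneg hk.le hX]

section Hardy

variable {E : Type*} [NormedAddCommGroup E] [InnerProductSpace ℝ E] [CompleteSpace E]
  {φ φ' : ℝ → E}

lemma integrableOn_norm_sq_div_sq (hφ : ContinuousOn φ (Icc 0 1))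
    (hφ' : ContinuousOn φ' (Icc 0 1)) (hd : ∀ y ∈ Ioo (0 : ℝ) 1, HasDerivAt φ (φ' y) y)
    (h0 : φ 0 = 0) : IntegrableOn (fun y => ‖φ y‖ ^ 2 / y ^ 2) (Ioo 0 1) := by
  obtain ⟨M, -, hMφ⟩ := exists_norm_le_mul_of_hasDerivAt hφ hφ' hd h0
  refine integrableOn_Ioo_of_continuousOn_of_norm_le
    (((hφ.mono Ioo_subset_Icc_self).norm.pow 2).div (continuousOn_id.pow 2)
      fun y hy => pow_ne_zero 2 hy.1.ne') (C := M ^ 2) fun y hy => ?_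
  have hy2 : 0 < y ^ 2 := pow_pos hy.1 2
  rw [Real.norm_of_nonneg (by positivity), div_le_iff₀ hy2, ← mul_pow]
  exact pow_le_pow_left₀ (norm_nonneg _) (hMφ y (Ioo_subset_Icc_self hy)) 2

lemma integrableOn_two_inner_div_sub_norm_sq_div_sq (hφ : ContinuousOn φ (Icc 0 1))
    (hφ' : ContinuousOn φ' (Icc 0 1)) (hd : ∀ y ∈ Ioo (0 : ℝ) 1, HasDerivAt φ (φ' y) y)
    (h0 : φ 0 = 0) :
    IntegrableOn (fun y => 2 * ⟪φ y, φ' y⟫ / y - ‖φ y‖ ^ 2 / y ^ 2) (Ioo 0 1) := by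
  obtain ⟨M, hMφ', hMφ⟩ := exists_norm_le_mul_of_hasDerivAt hφ hφ' hd h0
  refine IntegrableOn.sub (integrableOn_Ioo_of_continuousOn_of_norm_le
    ((continuousOn_const.mul ((hφ.mono Ioo_subset_Icc_self).inner
      (hφ'.mono Ioo_subset_Icc_self))).div continuousOn_id fun y hy => hy.1.ne')
    (C := 2 * M ^ 2) fun y hy => ?_) (integrableOn_norm_sq_div_sq hφ hφ' hd h0)
  have hyI := Ioo_subset_Icc_self hy
  rw [Real.norm_eq_abs, abs_div, abs_mul, abs_two, abs_of_pos hy.1, div_le_iff₀ hy.1]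
  calc 2 * |⟪φ y, φ' y⟫| ≤ 2 * (‖φ y‖ * ‖φ' y‖) := by gcongr; exact abs_real_inner_le_norm _ _
    _ ≤ 2 * (M * y * M) :=
      by gcongr; exacts [(norm_nonneg _).trans (hMφ y hyI), hMφ y hyI, hMφ' y hyI]
    _ = 2 * M ^ 2 * y := by ring

/-- `2⟪φ, φ'⟫ / y - ‖φ‖² / y²` is the derivative of `‖φ‖² / y`, which vanishes at `0` since
`‖φ y‖ = O(y)`. -/
lemma integral_two_inner_div_sub_norm_sq_div_sq (hφ : ContinuousOn φ (Icc 0 1))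
    (hφ' : ContinuousOn φ' (Icc 0 1)) (hd : ∀ y ∈ Ioo (0 : ℝ) 1, HasDerivAt φ (φ' y) y)
    (h0 : φ 0 = 0) :
    ∫ y in Ioo 0 1, (2 * ⟪φ y, φ' y⟫ / y - ‖φ y‖ ^ 2 / y ^ 2) = ‖φ 1‖ ^ 2 := by
  obtain ⟨M, -, hMφ⟩ := exists_norm_le_mul_of_hasDerivAt hφ hφ' hd h0
  have hW : ContinuousOn (fun y => ‖φ y‖ ^ 2 / y) (Icc 0 1) := by
    intro y hy
    rcases hy.1.eq_or_lt with rfl | hpos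
    · have hlim : Tendsto (fun y : ℝ => M ^ 2 * y) (𝓝[Icc 0 1] 0) (𝓝 0) :=
        tendsto_nhdsWithin_of_tendsto_nhds
          ((continuous_const.mul continuous_id).tendsto' 0 0 (mul_zero _))
      simp only [ContinuousWithinAt, div_zero]
      refine squeeze_zero_norm' ?_ hlim
      filter_upwards [self_mem_nhdsWithin] with x hx
      rw [Real.norm_of_nonneg (by have := hx.1; positivity)]
      rcases hx.1.eq_or_lt with rfl | hx0
      · simp
      rw [div_le_iff₀ hx0]
      calc ‖φ x‖ ^ 2 ≤ (M * x) ^ 2 := pow_le_pow_left₀ (norm_nonneg _) (hMφ x hx) 2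
        _ = M ^ 2 * x * x := by ring
    · exact (((hφ.norm.pow 2) y hy).div continuousWithinAt_id hpos.ne')
  have hWd : ∀ y ∈ Ioo (0 : ℝ) 1,
      HasDerivAt (fun y => ‖φ y‖ ^ 2 / y) (2 * ⟪φ y, φ' y⟫ / y - ‖φ y‖ ^ 2 / y ^ 2) y := by
    intro y hy
    refine ((hd y hy).norm_sq.div (hasDerivAt_id' y) hy.1.ne').congr_deriv ?_
    field_simp
  rw [← integral_Ioc_eq_integral_Ioo, ← intervalIntegral.integral_of_le zero_le_one,
    intervalIntegral.integral_eq_sub_of_hasDerivAt_of_le zero_le_one hW hWd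
      ((intervalIntegrable_iff_integrableOn_Ioo_of_le zero_le_one).2
        (integrableOn_two_inner_div_sub_norm_sq_div_sq hφ hφ' hd h0))]
  simp

theorem integral_norm_sq_div_sq_le_s19 (hφ : ContinuousOn φ (Icc 0 1))
    (hφ' : ContinuousOn φ' (Icc 0 1)) (hd : ∀ y ∈ Ioo (0 : ℝ) 1, HasDerivAt φ (φ' y) y)
    (h0 : φ 0 = 0) :
    ∫ y in Ioo 0 1, ‖φ y‖ ^ 2 / y ^ 2 ≤ 4 * ∫ y in Ioo 0 1, ‖φ' y‖ ^ 2 := by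
  have hH := integrableOn_norm_sq_div_sq hφ hφ' hd h0
  have hA : IntegrableOn (fun y => ‖φ' y‖ ^ 2) (Ioo 0 1) := (hφ'.norm.pow 2).integrableOn_Ioo
  have key : ∫ y in Ioo 0 1, (2 * ⟪φ y, φ' y⟫ / y - ‖φ y‖ ^ 2 / y ^ 2)
      ≤ ∫ y in Ioo 0 1, (2 * ‖φ' y‖ ^ 2 - 2⁻¹ * (‖φ y‖ ^ 2 / y ^ 2)) := by
    refine setIntegral_mono_on (integrableOn_two_inner_div_sub_norm_sq_div_sq hφ hφ' hd h0)
      ((hA.const_mul 2).sub (hH.const_mul _)) measurableSet_Ioo fun y hy => ?_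
    have hy0 : y ≠ 0 := hy.1.ne'
    have hinner := real_inner_le_norm (φ y) (φ' y)
    -- `2 ab ≤ a² / 2 + 2 b²` with `a = ‖φ y‖ / y`, `b = ‖φ' y‖`
    have hamgm := sq_nonneg (‖φ y‖ - 2 * y * ‖φ' y‖)
    rw [← sub_nonneg]
    have : 2 * ‖φ' y‖ ^ 2 - 2⁻¹ * (‖φ y‖ ^ 2 / y ^ 2) - (2 * ⟪φ y, φ' y⟫ / y - ‖φ y‖ ^ 2 / y ^ 2)
        = (2 * y ^ 2 * ‖φ' y‖ ^ 2 + 2⁻¹ * ‖φ y‖ ^ 2 - 2 * y * ⟪φ y, φ' y⟫) / y ^ 2 := by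
      field_simp; ring
    rw [this]
    exact div_nonneg (by nlinarith [hy.1]) (sq_nonneg y)
  rw [integral_two_inner_div_sub_norm_sq_div_sq hφ hφ' hd h0, integral_sub (hA.const_mul 2)
    (hH.const_mul _), integral_const_mul, integral_const_mul] at key
  linarith [sq_nonneg ‖φ 1‖]

end Hardy

section EnergyIdentity

variable {φ φ' φ'' q F : ℝ → ℂ}

lemma integral_conj_mul_deriv2 (hφ : ContinuousOn φ (Icc 0 1))
    (hφ' : ContinuousOn φ' (Icc 0 1)) (hφ'' : ContinuousOn φ'' (Icc 0 1))
    (hd : ∀ y ∈ Ioo (0 : ℝ) 1, HasDerivAt φ (φ' y) y)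
    (hd' : ∀ y ∈ Ioo (0 : ℝ) 1, HasDerivAt φ' (φ'' y) y) (h0 : φ 0 = 0) (h1 : φ 1 = 0) :
    ∫ y in Ioo 0 1, conj (φ y) * φ'' y = -(∫ y in Ioo 0 1, ‖φ' y‖ ^ 2 : ℝ) := by
  have hibp := intervalIntegral.integral_mul_deriv_eq_deriv_mul_of_hasDerivAt
    (u := fun y => conj (φ y)) (u' := fun y => conj (φ' y)) (v := φ') (v' := φ'')
    (by rw [uIcc_of_le zero_le_one]; exact continuous_conj.comp_continuousOn hφ)
    (by rw [uIcc_of_le zero_le_one]; exact hφ')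
    (fun y hy => by simpa using (hd y (by simpa using hy)).star)
    (fun y hy => hd' y (by simpa using hy))
    ((continuous_conj.comp_continuousOn hφ').intervalIntegrable_of_Icc zero_le_one)
    (hφ''.intervalIntegrable_of_Icc zero_le_one)
  simp only [h0, h1, map_zero, zero_mul, sub_zero, zero_sub, conj_mul'] at hibp
  rw [intervalIntegral.integral_of_le zero_le_one, intervalIntegral.integral_of_le zero_le_one,
    integral_Ioc_eq_integral_Ioo, integral_Ioc_eq_integral_Ioo] at hibp
  rw [hibp, ← integral_complex_ofReal]; simp only [ofReal_pow]

lemma integral_conj_mul_eq_of_deriv2_add_mul (hφ : ContinuousOn φ (Icc 0 1))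
    (hφ' : ContinuousOn φ' (Icc 0 1)) (hφ'' : ContinuousOn φ'' (Icc 0 1))
    (hd : ∀ y ∈ Ioo (0 : ℝ) 1, HasDerivAt φ (φ' y) y)
    (hd' : ∀ y ∈ Ioo (0 : ℝ) 1, HasDerivAt φ' (φ'' y) y) (h0 : φ 0 = 0) (h1 : φ 1 = 0)
    (hq : ContinuousOn q (Icc 0 1)) (hF : ∀ y ∈ Ioo (0 : ℝ) 1, φ'' y + q y * φ y = F y) :
    ∫ y in Ioo 0 1, conj (φ y) * F y
      = -(∫ y in Ioo 0 1, ‖φ' y‖ ^ 2 : ℝ) + ∫ y in Ioo 0 1, q y * (‖φ y‖ : ℂ) ^ 2 := by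
  have hφc : ContinuousOn (fun y => conj (φ y)) (Icc 0 1) := continuous_conj.comp_continuousOn hφ
  calc ∫ y in Ioo 0 1, conj (φ y) * F y
      = ∫ y in Ioo 0 1, (conj (φ y) * φ'' y + q y * (‖φ y‖ : ℂ) ^ 2) :=
        setIntegral_congr_fun measurableSet_Ioo fun y hy => by
          rw [← hF y hy, ← conj_mul']; ring
    _ = _ := by
        have hi₁ : IntegrableOn (fun y => conj (φ y) * φ'' y) (Ioo 0 1) :=
          (hφc.mul hφ'').integrableOn_Ioo
        have hi₂ : IntegrableOn (fun y => q y * (‖φ y‖ : ℂ) ^ 2) (Ioo 0 1) :=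
          (hq.mul ((continuous_ofReal.comp_continuousOn hφ.norm).pow 2)).integrableOn_Ioo
        rw [integral_add hi₁ hi₂, integral_conj_mul_deriv2 hφ hφ' hφ'' hd hd' h0 h1]

end EnergyIdentity

noncomputable def criticalPotential (m y₀ ε y : ℝ) : ℂ :=
  -(m : ℂ) ^ 2 + 1 / 4 / ((y : ℂ) - y₀ + ε * I) ^ 2

section CriticalPotential

variable {m y₀ ε y : ℝ}

lemma criticalPotential_re : (criticalPotential m y₀ ε y).re
    = -m ^ 2 + ((y - y₀) ^ 2 - ε ^ 2) / ((y - y₀) ^ 2 + ε ^ 2) ^ 2 / 4 := by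
  simp [criticalPotential, div_re, normSq, pow_two]
  ring

lemma criticalPotential_im : (criticalPotential m y₀ ε y).im
    = -(ε * (y - y₀) / ((y - y₀) ^ 2 + ε ^ 2) ^ 2) / 2 := by
  simp [criticalPotential, div_im, normSq, pow_two]
  ring

lemma continuous_criticalPotential (m y₀ : ℝ) {ε : ℝ} (hε : ε ≠ 0) :
    Continuous (criticalPotential m y₀ ε) := by
  refine continuous_const.add (continuous_const.div (by fun_prop) fun y => pow_ne_zero 2 ?_)
  intro h
  simpa [hε] using congrArg im h

lemma criticalPotential_re_le (hy₀ : y₀ ≤ 0) (hy : y ∈ Ioo 0 1) :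
    (criticalPotential m y₀ ε y).re ≤ -m ^ 2 + ((1 + ε ^ 2) * y ^ 2)⁻¹ / 4 := by
  have hpos : 0 < (y - y₀) ^ 2 + ε ^ 2 := by nlinarith [hy.1, sq_nonneg ε]
  rw [criticalPotential_re]
  gcongr
  calc ((y - y₀) ^ 2 - ε ^ 2) / ((y - y₀) ^ 2 + ε ^ 2) ^ 2
      ≤ ((y - y₀) ^ 2 + ε ^ 2) / ((y - y₀) ^ 2 + ε ^ 2) ^ 2 := by
        gcongr; nlinarith [sq_nonneg ε]
    _ = ((y - y₀) ^ 2 + ε ^ 2)⁻¹ := by field_simp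
    _ ≤ ((1 + ε ^ 2) * y ^ 2)⁻¹ := by
        gcongr
        · have := hy.1; positivity
        · nlinarith [hy.1, hy.2, sq_nonneg ε, mul_le_mul_of_nonneg_left hy.2.le (sq_nonneg ε)]

lemma integrableOn_criticalPotential_mul (hε : ε ≠ 0) {φ : ℝ → ℂ}
    (hφ : ContinuousOn φ (Icc 0 1)) :
    IntegrableOn (fun y => criticalPotential m y₀ ε y * (‖φ y‖ : ℂ) ^ 2) (Ioo 0 1) :=
  ((continuous_criticalPotential m y₀ hε).continuousOn.mul
    ((continuous_ofReal.comp_continuousOn hφ.norm).pow 2)).integrableOn_Ioo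

lemma im_integral_criticalPotential_mul (hε : ε ≠ 0) {φ : ℝ → ℂ}
    (hφ : ContinuousOn φ (Icc 0 1)) :
    (∫ y in Ioo 0 1, criticalPotential m y₀ ε y * (‖φ y‖ : ℂ) ^ 2).im
      = -(∫ y in Ioo 0 1, ε * (y - y₀) / ((y - y₀) ^ 2 + ε ^ 2) ^ 2 * ‖φ y‖ ^ 2) / 2 := by
  rw [← RCLike.im_to_complex, ← integral_im (integrableOn_criticalPotential_mul hε hφ),
    ← integral_neg, ← integral_div]
  refine setIntegral_congr_fun measurableSet_Ioo fun y _ => ?_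
  rw [RCLike.im_to_complex, ← ofReal_pow, im_mul_ofReal, criticalPotential_im]
  ring

lemma re_integral_criticalPotential_mul_le (hy₀ : y₀ ≤ 0) (hε : ε ≠ 0) {φ φ' : ℝ → ℂ}
    (hφ : ContinuousOn φ (Icc 0 1)) (hφ' : ContinuousOn φ' (Icc 0 1))
    (hd : ∀ y ∈ Ioo (0 : ℝ) 1, HasDerivAt φ (φ' y) y) (h0 : φ 0 = 0) :
    (∫ y in Ioo 0 1, criticalPotential m y₀ ε y * (‖φ y‖ : ℂ) ^ 2).re
      ≤ -m ^ 2 * (∫ y in Ioo 0 1, ‖φ y‖ ^ 2) + (1 + ε ^ 2)⁻¹ * ∫ y in Ioo 0 1, ‖φ' y‖ ^ 2 := by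
  have hB : IntegrableOn (fun y => ‖φ y‖ ^ 2) (Ioo 0 1) := (hφ.norm.pow 2).integrableOn_Ioo
  have hH := integrableOn_norm_sq_div_sq hφ hφ' hd h0
  rw [← RCLike.re_to_complex, ← integral_re (integrableOn_criticalPotential_mul hε hφ)]
  calc ∫ y in Ioo 0 1, RCLike.re (criticalPotential m y₀ ε y * (‖φ y‖ : ℂ) ^ 2)
      ≤ ∫ y in Ioo 0 1, (-m ^ 2 * ‖φ y‖ ^ 2 + ((1 + ε ^ 2) * 4)⁻¹ * (‖φ y‖ ^ 2 / y ^ 2)) := by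
        refine setIntegral_mono_on ?_ ((hB.const_mul _).add (hH.const_mul _))
          measurableSet_Ioo fun y hy => ?_
        · exact (integrableOn_criticalPotential_mul hε hφ).re
        rw [RCLike.re_to_complex, ← ofReal_pow, re_mul_ofReal]
        have hy0 : y ≠ 0 := hy.1.ne'
        calc (criticalPotential m y₀ ε y).re * ‖φ y‖ ^ 2
            ≤ (-m ^ 2 + ((1 + ε ^ 2) * y ^ 2)⁻¹ / 4) * ‖φ y‖ ^ 2 := by
              gcongr; exact criticalPotential_re_le hy₀ hy
          _ = _ := by field_simp
    _ = -m ^ 2 * (∫ y in Ioo 0 1, ‖φ y‖ ^ 2)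
          + ((1 + ε ^ 2) * 4)⁻¹ * ∫ y in Ioo 0 1, ‖φ y‖ ^ 2 / y ^ 2 := by
        rw [integral_add (hB.const_mul _) (hH.const_mul _), integral_const_mul,
          integral_const_mul]
    _ ≤ _ := by
        have := integral_norm_sq_div_sq_le_s19 hφ hφ' hd h0
        rw [mul_inv, mul_assoc]
        gcongr
        linarith

end CriticalPotential

/-- Degenerate `H¹` bounds in the critical case `β² = 1/4`: there is an absolute constant
`C > 0` such that for every integer `m ≥ 1`, `y₀ ≤ 0`, `ε ∈ (0,1]`, and every `C²` function
`φ : [0,1] → ℂ` (derivatives `φ'`, `φ''`) with `φ(0) = φ(1) = 0` solving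
`φ'' - m²φ + (1/4)φ/(y-y₀+iε)² = F` on `(0,1)` with `F` continuous:
`(ε²/(1+ε²)) ‖φ'‖²_{L²} + m² ‖φ‖²_{L²} ≤ C m^{-2} ‖F‖²_{L²}`, and
`0 ≤ ∫₀¹ ε(y-y₀)/((y-y₀)²+ε²)² |φ|² dy ≤ 2 ‖φ‖_{L²} ‖F‖_{L²}`. -/
theorem stmt19 :
    ∃ C > (0 : ℝ), ∀ m : ℕ, 1 ≤ m → ∀ y₀ : ℝ, y₀ ≤ 0 → ∀ ε : ℝ, 0 < ε → ε ≤ 1 →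
      ∀ φ φ' φ'' F : ℝ → ℂ,
        ContinuousOn φ (Set.Icc 0 1) →
        ContinuousOn φ' (Set.Icc 0 1) →
        ContinuousOn φ'' (Set.Icc 0 1) →
        ContinuousOn F (Set.Icc 0 1) →
        (∀ y ∈ Set.Ioo (0 : ℝ) 1, HasDerivAt φ (φ' y) y) →
        (∀ y ∈ Set.Ioo (0 : ℝ) 1, HasDerivAt φ' (φ'' y) y) →
        φ 0 = 0 → φ 1 = 0 →
        (∀ y ∈ Set.Ioo (0 : ℝ) 1,
          φ'' y - (m : ℂ) ^ 2 * φ y +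
            (1 / 4 : ℂ) * φ y / ((y : ℂ) - (y₀ : ℂ) + (ε : ℂ) * Complex.I) ^ 2 = F y) →
        ((ε ^ 2 / (1 + ε ^ 2)) * (∫ y in Set.Ioo (0 : ℝ) 1, ‖φ' y‖ ^ 2)
            + (m : ℝ) ^ 2 * (∫ y in Set.Ioo (0 : ℝ) 1, ‖φ y‖ ^ 2)
          ≤ C * ((m : ℝ) ^ 2)⁻¹ * (∫ y in Set.Ioo (0 : ℝ) 1, ‖F y‖ ^ 2)) ∧
        (0 ≤ ∫ y in Set.Ioo (0 : ℝ) 1,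
            ε * (y - y₀) / ((y - y₀) ^ 2 + ε ^ 2) ^ 2 * ‖φ y‖ ^ 2) ∧
        ((∫ y in Set.Ioo (0 : ℝ) 1,
            ε * (y - y₀) / ((y - y₀) ^ 2 + ε ^ 2) ^ 2 * ‖φ y‖ ^ 2)
          ≤ 2 * Real.sqrt (∫ y in Set.Ioo (0 : ℝ) 1, ‖φ y‖ ^ 2) *
              Real.sqrt (∫ y in Set.Ioo (0 : ℝ) 1, ‖F y‖ ^ 2)) := by
  refine ⟨1, one_pos, fun m hm y₀ hy₀ ε hε _ φ φ' φ'' F hφ hφ' hφ'' hF hd hd' h0 h1 hode => ?_⟩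
  have hE := integral_conj_mul_eq_of_deriv2_add_mul (F := F) hφ hφ' hφ'' hd hd' h0 h1
    (continuous_criticalPotential m y₀ hε.ne').continuousOn fun y hy => by
      rw [← hode y hy, criticalPotential]; push_cast; ring
  have hre := congrArg re hE
  have him := congrArg im hE
  simp only [add_re, neg_re, ofReal_re, add_im, neg_im, ofReal_im, neg_zero, zero_add] at hre him
  rw [im_integral_criticalPotential_mul hε.ne' hφ] at him
  have hpot := re_integral_criticalPotential_mul_le (m := m) hy₀ hε.ne' hφ hφ' hd h0
  have hCS := norm_integral_conj_mul_le hφ hF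
  set IF := ∫ y in Ioo 0 1, conj (φ y) * F y
  have hsq {f : ℝ → ℂ} : 0 ≤ ∫ y in Ioo 0 1, ‖f y‖ ^ 2 :=
    setIntegral_nonneg measurableSet_Ioo fun _ _ => sq_nonneg _
  refine ⟨?_, setIntegral_nonneg measurableSet_Ioo fun y hy => ?_, ?_⟩
  · rw [one_mul, ← div_eq_inv_mul]
    refine add_mul_le_div_of_le_sqrt_mul_sqrt (mul_nonneg (by positivity) hsq) (by positivity)
      hsq hsq ?_
    have : ε ^ 2 / (1 + ε ^ 2) = 1 - (1 + ε ^ 2)⁻¹ := by field_simp; ring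
    rw [this]
    linarith [neg_le_abs IF.re, abs_re_le_norm IF]
  · have : 0 < y - y₀ := by linarith [hy.1]
    positivity
  · linarith [neg_le_abs IF.im, abs_im_le_norm IF]
end
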